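/- arXiv:2211.00587 — 2 statements merged into one kernel-verified Lean document; each statement's English description precedes it below -/
import Mathlib

section
/- The index of the group (Γ(2)·⟨Y⟩)⁺ (the determinant-1 elements of Γ(2)·⟨Y⟩) in SL(2,ℤ) is exactly 3, with right-coset representatives Id, T = [[1,1],[0,1]], and TS = [[1,-1],[1,0]]. -/
open Matrix

/-- `Γ(2) ⊆ GL(2, ℤ)`: integer matrices of determinant `±1` with even off-diagonal entries. -/
def Gamma2Set : Set (GL (Fin 2) ℤ) :=
  {X | (2 : ℤ) ∣ (X : Matrix (Fin 2) (Fin 2) ℤ) 0 1 ∧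
       (2 : ℤ) ∣ (X : Matrix (Fin 2) (Fin 2) ℤ) 1 0}

/-- The swap matrix `Y = [[0,1],[1,0]]` as an element of `GL(2, ℤ)`. -/
def Ymat : GL (Fin 2) ℤ :=
  ⟨!![0, 1; 1, 0], !![0, 1; 1, 0], by decide, by decide⟩

/-- `(Γ(2)·⟨Y⟩)⁺`: the determinant-one elements of the group generated by `Γ(2)` and `Y`,
viewed as a subgroup of `SL(2, ℤ)`. -/
def Gamma2YPlus : Subgroup (Matrix.SpecialLinearGroup (Fin 2) ℤ) :=
  (Subgroup.closure (Gamma2Set ∪ {Ymat})).comap Matrix.SpecialLinearGroup.toGL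

/-- `S = [[0,-1],[1,0]]` in `SL(2, ℤ)`. -/
def Smat : Matrix.SpecialLinearGroup (Fin 2) ℤ :=
  ⟨!![0, -1; 1, 0], by norm_num [Matrix.det_fin_two_of]⟩

/-- `T = [[1,1],[0,1]]` in `SL(2, ℤ)`. -/
def Tmat : Matrix.SpecialLinearGroup (Fin 2) ℤ :=
  ⟨!![1, 1; 0, 1], by norm_num [Matrix.det_fin_two_of]⟩

/-! Reduction mod 2 maps `GL(2, ℤ)` to `GL(2, 𝔽₂) ≅ S₃`. Since the determinant is odd, an
integer matrix with even off-diagonal entries has odd diagonal entries, so `Γ(2)` is exactly the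
kernel of this reduction, and `Γ(2)·⟨Y⟩` is the preimage of the order-two subgroup `{1, Ȳ}`.
Both the index and the coset representatives can therefore be read off in the group of order 6. -/

abbrev reduceModTwo : GL (Fin 2) ℤ →* GL (Fin 2) (ZMod 2) :=
  GeneralLinearGroup.map (Int.castRingHom (ZMod 2))

theorem zmod_two_matrix_eq_one_iff_of_det_eq_one {A : Matrix (Fin 2) (Fin 2) (ZMod 2)}
    (h : A.det = 1) : A = 1 ↔ A 0 1 = 0 ∧ A 1 0 = 0 := by
  obtain ⟨a, b, c, d, rfl⟩ : ∃ a b c d, A = !![a, b; c, d] := ⟨_, _, _, _, A.eta_fin_two⟩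
  rw [det_fin_two_of] at h
  revert a b c d
  decide

theorem mem_Gamma2Set_iff (X : GL (Fin 2) ℤ) : X ∈ Gamma2Set ↔ reduceModTwo X = 1 := by
  have hdet : (reduceModTwo X : Matrix (Fin 2) (Fin 2) (ZMod 2)).det = 1 := by
    rw [← GeneralLinearGroup.val_det_apply, Subsingleton.elim (GeneralLinearGroup.det _) 1,
      Units.val_one]
  simp only [Gamma2Set, Set.mem_ofPred_eq, Units.ext_iff, Units.val_one,
    zmod_two_matrix_eq_one_iff_of_det_eq_one hdet, GeneralLinearGroup.map_apply,
    Int.coe_castRingHom, ZMod.intCast_zmod_eq_zero_iff_dvd, Nat.cast_ofNat]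

theorem Subgroup.mem_zpowers_iff_of_sq_eq_one {G : Type*} [Group G] {g x : G} (hg : g ^ 2 = 1) :
    x ∈ zpowers g ↔ x = 1 ∨ x = g := by
  refine ⟨?_, by rintro (rfl | rfl) <;> simp [one_mem, mem_zpowers]⟩
  rintro ⟨k, rfl⟩
  have hk : g ^ k = g ^ (k % 2) := by
    conv_lhs => rw [← Int.emod_add_mul_ediv k 2, _root_.zpow_add, _root_.zpow_mul, zpow_ofNat,
      hg, _root_.one_zpow, mul_one]
  rcases Int.emod_two_eq_zero_or_one k with h | h <;> simp [hk, h]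

theorem closure_Gamma2Set_union_Ymat :
    Subgroup.closure (Gamma2Set ∪ {Ymat}) =
      (Subgroup.zpowers (reduceModTwo Ymat)).comap reduceModTwo := by
  have hker : (reduceModTwo.ker : Set (GL (Fin 2) ℤ)) = Gamma2Set :=
    Set.ext fun X ↦ (mem_Gamma2Set_iff X).symm
  rw [Subgroup.closure_union, ← hker, Subgroup.closure_eq, ← Subgroup.zpowers_eq_closure,
    ← MonoidHom.map_zpowers, Subgroup.comap_map_eq, sup_comm]

theorem mem_Gamma2YPlus_iff (A : SpecialLinearGroup (Fin 2) ℤ) :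
    A ∈ Gamma2YPlus ↔ reduceModTwo A.toGL = 1 ∨ reduceModTwo A.toGL = reduceModTwo Ymat := by
  rw [Gamma2YPlus, Subgroup.mem_comap, closure_Gamma2Set_union_Ymat, Subgroup.mem_comap,
    Subgroup.mem_zpowers_iff_of_sq_eq_one (by decide)]

theorem existsUnique_reduceModTwo_mul_inv_rep (B : GL (Fin 2) (ZMod 2)) :
    ∃! i : Fin 3,
      B * (reduceModTwo (![1, Tmat, Tmat * Smat] i).toGL)⁻¹ = 1 ∨
      B * (reduceModTwo (![1, Tmat, Tmat * Smat] i).toGL)⁻¹ = reduceModTwo Ymat := by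
  revert B
  unfold ExistsUnique
  decide

theorem Subgroup.index_eq_card_of_existsUnique_mul_inv_mem {G ι : Type*} [Group G]
    {H : Subgroup G} {f : ι → G} (h : ∀ g, ∃! i, g * (f i)⁻¹ ∈ H) : H.index = Nat.card ι := by
  have hf : f.Injective := fun i j hij ↦
    (h (f j)).unique (by simp [hij, one_mem]) (by simp [one_mem])
  have hcompl : IsComplement (H : Set G) (Set.range f) := by
    refine isComplement_iff_existsUnique_mul_inv_mem.mpr fun g ↦ ?_
    obtain ⟨i, hi, hunique⟩ := h g
    refine ⟨⟨f i, i, rfl⟩, hi, ?_⟩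
    rintro ⟨_, j, rfl⟩ hj
    simp [hunique j hj]
  rw [← hcompl.card_right, Nat.card_range_of_injective hf]

/-- The index of `(Γ(2)·⟨Y⟩)⁺` in `SL(2, ℤ)` is exactly 3, with right-coset representatives
`Id`, `T = [[1,1],[0,1]]`, and `TS = [[1,-1],[1,0]]`. -/
theorem stmt8 :
    Gamma2YPlus.index = 3 ∧
    ∀ A : Matrix.SpecialLinearGroup (Fin 2) ℤ,
      ∃! i : Fin 3, A * (![1, Tmat, Tmat * Smat] i)⁻¹ ∈ Gamma2YPlus := by
  have hcosets : ∀ A : SpecialLinearGroup (Fin 2) ℤ,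
      ∃! i : Fin 3, A * (![1, Tmat, Tmat * Smat] i)⁻¹ ∈ Gamma2YPlus := by
    intro A
    simp only [mem_Gamma2YPlus_iff, map_mul, map_inv]
    exact existsUnique_reduceModTwo_mul_inv_rep _
  exact ⟨by rw [Subgroup.index_eq_card_of_existsUnique_mul_inv_mem hcosets, Nat.card_fin],
    hcosets⟩
end

section
/- Let A = [[R(π), 0],[0, Id₂]] ∈ GL(4,ℝ), i.e. A = diag(−1,−1,1,1). Then for X ∈ GL(4,ℝ), the matrix XᵗX commutes with A if and only if X has the form X = Q·[[B,0],[0,C]] for some Q ∈ O(4) and B, C ∈ GL(2,ℝ). Equivalently, writing X = (x₁ x₂ x₃ x₄) in columns, XᵗX commutes with A iff xᵢ ⊥ xⱼ for all i ∈ {1,2}, j ∈ {3,4}. -/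
/-!
`XᵀX` is the Gram matrix of the columns of `X`. Conjugating by `finSumFinEquiv`, `A` becomes
`diag(-1, 1)` in 2 × 2 blocks, and a matrix commutes with it iff its off-diagonal blocks vanish;
for the symmetric Gram matrix this is exactly the orthogonality of the first two columns to the
last two. For the factorisation, `X = Q D` with `Q` orthogonal iff `XᵀX = DᵀD` (take
`Q = X D⁻¹`), and a positive definite block-diagonal matrix is `DᵀD` for
`D = diag(B, C)`, factoring each diagonal block as `BᵀB` with `B` invertible.
-/

open Matrix

/-- `A = diag(−1,−1,1,1)`, the holonomy generator of `O⁴₂`. -/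
def Amat : Matrix (Fin 4) (Fin 4) ℝ :=
  !![-1, 0, 0, 0; 0, -1, 0, 0; 0, 0, 1, 0; 0, 0, 0, 1]

namespace Matrix

variable {m n R : Type*}

theorem exists_mem_orthogonalGroup_mul_eq_iff [Fintype n] [DecidableEq n] [CommRing R]
    {X D : Matrix n n R} (hD : IsUnit D) :
    (∃ Q ∈ orthogonalGroup n R, X = Q * D) ↔ Xᵀ * X = Dᵀ * D := by
  have hD' : IsUnit D.det := (isUnit_iff_isUnit_det D).1 hD
  constructor
  · rintro ⟨Q, hQ, rfl⟩
    rw [transpose_mul, Matrix.mul_assoc, ← Matrix.mul_assoc Qᵀ,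
      (mem_orthogonalGroup_iff' n R).1 hQ, Matrix.one_mul]
  · intro h
    refine ⟨X * D⁻¹, (mem_orthogonalGroup_iff' n R).2 ?_, ?_⟩
    · calc (X * D⁻¹)ᵀ * (X * D⁻¹) = (Dᵀ)⁻¹ * (Xᵀ * X) * D⁻¹ := by
            simp only [transpose_mul, transpose_nonsing_inv, Matrix.mul_assoc]
        _ = ((Dᵀ)⁻¹ * Dᵀ) * (D * D⁻¹) := by simp only [h, Matrix.mul_assoc]
        _ = 1 := by
          rw [nonsing_inv_mul _ (by rwa [det_transpose]), mul_nonsing_inv _ hD', Matrix.one_mul]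
    · rw [Matrix.mul_assoc, nonsing_inv_mul _ hD', Matrix.mul_one]

theorem exists_mem_orthogonalGroup_mul_reindex_eq_iff [Fintype m] [Fintype n] [DecidableEq m]
    [DecidableEq n] [CommRing R] (e : m ≃ n) {X : Matrix n n R} {D : Matrix m m R}
    (hD : IsUnit D) :
    (∃ Q ∈ orthogonalGroup n R, X = Q * reindex e e D) ↔ (Xᵀ * X).submatrix e e = Dᵀ * D := by
  have hD' : IsUnit (reindex e e D) := by rwa [← coe_reindexAlgEquiv R R, isUnit_map_iff]
  rw [exists_mem_orthogonalGroup_mul_eq_iff hD', ← (reindex e.symm e.symm).injective.eq_iff]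
  simp only [reindex_apply, Equiv.symm_symm, transpose_submatrix,
    submatrix_mul_equiv _ _ _ e.symm, submatrix_submatrix, Equiv.symm_comp_self, submatrix_id_id]

open scoped ComplexOrder in
theorem PosDef.exists_isUnit_eq_conjTranspose_mul_self [Fintype n] [DecidableEq n] {𝕜 : Type*}
    [RCLike 𝕜] {A : Matrix n n 𝕜} (hA : A.PosDef) : ∃ B, IsUnit B ∧ A = Bᴴ * B := by
  open scoped MatrixOrder in
  obtain ⟨B, rfl⟩ := CStarAlgebra.nonneg_iff_eq_star_mul_self.mp hA.posSemidef.nonneg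
  refine ⟨B, ?_, rfl⟩
  have h := (isUnit_iff_isUnit_det _).1 hA.isUnit
  rw [det_mul] at h
  exact (isUnit_iff_isUnit_det B).2 (isUnit_of_mul_isUnit_right h)

theorem posDef_transpose_mul_self_of_isUnit [Fintype n] [DecidableEq n] {X : Matrix n n ℝ}
    (hX : IsUnit X) : (Xᵀ * X).PosDef := by
  simpa using PosDef.conjTranspose_mul_self X (mulVec_injective_iff_isUnit.2 hX)

theorem IsSymm.toBlocks₂₁_eq_zero [Zero R] {M : Matrix (m ⊕ n) (m ⊕ n) R} (hM : M.IsSymm)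
    (h₁₂ : M.toBlocks₁₂ = 0) : M.toBlocks₂₁ = 0 := by
  rw [← fromBlocks_toBlocks M, isSymm_fromBlocks_iff, h₁₂, transpose_zero] at hM
  exact hM.2.1.symm

theorem fromBlocks_transpose_mul_fromBlocks_zero [Fintype m] [Fintype n] [CommRing R]
    (B : Matrix m m R) (C : Matrix n n R) :
    (fromBlocks B 0 0 C)ᵀ * fromBlocks B 0 0 C = fromBlocks (Bᵀ * B) 0 0 (Cᵀ * C) := by
  simp [fromBlocks_transpose, fromBlocks_multiply]

theorem PosDef.exists_fromBlocks_transpose_mul_self_iff [Fintype m] [Fintype n] [DecidableEq m]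
    [DecidableEq n] {H : Matrix (m ⊕ n) (m ⊕ n) ℝ} (hH : H.PosDef) :
    (∃ (B : GL m ℝ) (C : GL n ℝ),
        H = (fromBlocks (B : Matrix m m ℝ) 0 0 C)ᵀ * fromBlocks (B : Matrix m m ℝ) 0 0 C) ↔
      H.toBlocks₁₂ = 0 := by
  simp only [fromBlocks_transpose_mul_fromBlocks_zero]
  constructor
  · rintro ⟨B, C, rfl⟩
    exact toBlocks_fromBlocks₁₂ _ _ _ _
  · intro h₁₂
    have h₂₁ := (isHermitian_iff_isSymm.1 hH.isHermitian).toBlocks₂₁_eq_zero h₁₂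
    obtain ⟨B, hB, hB'⟩ := (hH.submatrix Sum.inl_injective).exists_isUnit_eq_conjTranspose_mul_self
    obtain ⟨C, hC, hC'⟩ := (hH.submatrix Sum.inr_injective).exists_isUnit_eq_conjTranspose_mul_self
    refine ⟨hB.unit, hC.unit, ?_⟩
    rw [← fromBlocks_toBlocks H, h₁₂, h₂₁]
    simp only [IsUnit.unit_spec, ← conjTranspose_eq_transpose_of_trivial, ← hB', ← hC']
    rfl

theorem mul_eq_mul_iff_submatrix_equiv [Fintype m] [Fintype n] [Semiring R] (e : m ≃ n)
    (G M : Matrix n n R) :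
    G * M = M * G ↔ G.submatrix e e * M.submatrix e e = M.submatrix e e * G.submatrix e e := by
  rw [← (reindex e.symm e.symm).injective.eq_iff]
  simp only [reindex_apply, Equiv.symm_symm, submatrix_mul_equiv _ _ _ e]

theorem mul_fromBlocks_neg_one_one_comm_iff [Fintype m] [Fintype n] [DecidableEq m]
    [DecidableEq n] [Ring R] [IsAddTorsionFree R] {M : Matrix (m ⊕ n) (m ⊕ n) R} :
    M * fromBlocks (-1) 0 0 1 = fromBlocks (-1) 0 0 1 * M ↔
      M.toBlocks₁₂ = 0 ∧ M.toBlocks₂₁ = 0 := by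
  conv_lhs => rw [← fromBlocks_toBlocks M]
  simp only [fromBlocks_multiply, Matrix.mul_neg, Matrix.neg_mul, Matrix.mul_one, Matrix.one_mul,
    Matrix.mul_zero, Matrix.zero_mul, add_zero, zero_add, fromBlocks_inj, true_and, and_true]
  simp only [← Matrix.ext_iff, Matrix.neg_apply, Matrix.zero_apply, self_eq_neg, neg_eq_self]

theorem toBlocks₁₂_submatrix_finSumFinEquiv_eq_zero_iff [Zero R] {m n : ℕ}
    {G : Matrix (Fin (m + n)) (Fin (m + n)) R} :
    (G.submatrix finSumFinEquiv finSumFinEquiv).toBlocks₁₂ = 0 ↔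
      ∀ i j : Fin (m + n), (i : ℕ) < m → m ≤ (j : ℕ) → G i j = 0 := by
  simp only [← Matrix.ext_iff, toBlocks₁₂, submatrix_apply, of_apply, zero_apply,
    finSumFinEquiv_apply_left, finSumFinEquiv_apply_right]
  constructor
  · intro h i j hi hj
    convert h ⟨i, hi⟩ ⟨j - m, by omega⟩ <;> ext <;> simp
    omega
  · intro h a b
    exact h _ _ a.isLt (by simp)

end Matrix

theorem Amat_submatrix_finSumFinEquiv :
    Amat.submatrix (finSumFinEquiv : Fin 2 ⊕ Fin 2 ≃ Fin 4)
        (finSumFinEquiv : Fin 2 ⊕ Fin 2 ≃ Fin 4) =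
      fromBlocks (-1) 0 0 1 := by
  ext (a | a) (b | b) <;> fin_cases a <;> fin_cases b <;> simp [Amat] <;> rfl

/-- For `A = diag(−1,−1,1,1)` and `X ∈ GL(4,ℝ)`, the matrix `XᵗX` commutes with `A` if and
only if `X = Q·[[B,0],[0,C]]` with `Q ∈ O(4)`, `B, C ∈ GL(2,ℝ)`; equivalently, iff the first
two columns of `X` are orthogonal to the last two. -/
theorem stmt13 (X : GL (Fin 4) ℝ) :
    (((X : Matrix (Fin 4) (Fin 4) ℝ)ᵀ * X) * Amat = Amat * ((X : Matrix (Fin 4) (Fin 4) ℝ)ᵀ * X) ↔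
      ∃ Q ∈ Matrix.orthogonalGroup (Fin 4) ℝ, ∃ B C : GL (Fin 2) ℝ,
        (X : Matrix (Fin 4) (Fin 4) ℝ) =
          Q * Matrix.reindex (finSumFinEquiv : Fin 2 ⊕ Fin 2 ≃ Fin 4)
                (finSumFinEquiv : Fin 2 ⊕ Fin 2 ≃ Fin 4)
                (Matrix.fromBlocks (B : Matrix (Fin 2) (Fin 2) ℝ) 0 0
                  (C : Matrix (Fin 2) (Fin 2) ℝ))) ∧
    (((X : Matrix (Fin 4) (Fin 4) ℝ)ᵀ * X) * Amat = Amat * ((X : Matrix (Fin 4) (Fin 4) ℝ)ᵀ * X) ↔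
      ∀ i j : Fin 4, (i : ℕ) < 2 → 2 ≤ (j : ℕ) →
        (fun k => (X : Matrix (Fin 4) (Fin 4) ℝ) k i) ⬝ᵥ
          (fun k => (X : Matrix (Fin 4) (Fin 4) ℝ) k j) = 0) := by
  set e : Fin 2 ⊕ Fin 2 ≃ Fin 4 := finSumFinEquiv
  set G := (X : Matrix (Fin 4) (Fin 4) ℝ)ᵀ * X
  have hH : (G.submatrix e e).PosDef :=
    (posDef_transpose_mul_self_of_isUnit X.isUnit).submatrix e.injective
  have hcomm : G * Amat = Amat * G ↔ (G.submatrix e e).toBlocks₁₂ = 0 := by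
    rw [mul_eq_mul_iff_submatrix_equiv e, Amat_submatrix_finSumFinEquiv,
      mul_fromBlocks_neg_one_one_comm_iff, and_iff_left_of_imp]
    exact (isHermitian_iff_isSymm.1 hH.isHermitian).toBlocks₂₁_eq_zero
  refine ⟨?_, hcomm.trans (toBlocks₁₂_submatrix_finSumFinEquiv_eq_zero_iff (m := 2) (n := 2))⟩
  rw [hcomm, ← hH.exists_fromBlocks_transpose_mul_self_iff]
  have hD (B C : GL (Fin 2) ℝ) :
      IsUnit (fromBlocks (B : Matrix (Fin 2) (Fin 2) ℝ) 0 0 (C : Matrix (Fin 2) (Fin 2) ℝ)) :=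
    isUnit_fromBlocks_zero₁₂.2 ⟨B.isUnit, C.isUnit⟩
  exact ⟨fun ⟨B, C, h⟩ =>
      let ⟨Q, hQ, hX⟩ := (exists_mem_orthogonalGroup_mul_reindex_eq_iff e (hD B C)).2 h
      ⟨Q, hQ, B, C, hX⟩,
    fun ⟨Q, hQ, B, C, hX⟩ =>
      ⟨B, C, (exists_mem_orthogonalGroup_mul_reindex_eq_iff e (hD B C)).1 ⟨Q, hQ, hX⟩⟩⟩
end
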